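/- There exist unique power series X₁, X₂ ∈ ℂ[[x]] with X₁·C₁ = D C₁ and X₂·C₂ = D C₂ (i.e. C₁ divides D C₁ and C₂ divides D C₂ in ℂ[[x]]), and both X₁ and X₂ have constant coefficient 1. Moreover, letting DL/L denote the unique power series f with f·L = D L, the series DL/L − X₁ and 2·(DL/L) − X₁ − X₂ are divisible by L in ℂ[[x]] (so the series A₁ = (1/L)(DL/L − X₁) and A₂ = (1/L)(2·DL/L − X₁ − X₂) are well-defined elements of ℂ[[x]]). -/

import Mathlib

open PowerSeries

/-- The derivation `D = x · d/dx` on `ℂ[[x]]`. -/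
noncomputable def Dop (f : PowerSeries ℂ) : PowerSeries ℂ :=
  PowerSeries.X * PowerSeries.derivative ℂ f

/-- The power series `I_j = Σ_{m≥0} (−1)^m (∏_{l=0}^{m−1} (l + j/5)^5) x^{5m+j}/(5m+j)!`,
for `1 ≤ j ≤ 3`.  (The coefficient of `x^n` is nonzero only for `n ≡ j mod 5`, in which
case `n = 5m + j` with `m = (n − j)/5`.) -/
noncomputable def Iser (j : ℕ) : PowerSeries ℂ :=
  PowerSeries.mk fun n =>
    if n % 5 = j then
      (-1 : ℂ) ^ ((n - j) / 5) *
        (∏ l ∈ Finset.range ((n - j) / 5), ((l : ℂ) + (j : ℂ) / 5) ^ 5) / (n.factorial : ℂ)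
    else 0

lemma coeff_Dop (f : PowerSeries ℂ) (n : ℕ) :
    PowerSeries.coeff (R := ℂ) n (Dop f) = n * PowerSeries.coeff (R := ℂ) n f := by
  cases n with
  | zero =>
    simp [Dop, PowerSeries.coeff_zero_eq_constantCoeff]
  | succ n =>
    rw [Dop, PowerSeries.coeff_succ_X_mul, PowerSeries.coeff_derivative]
    push_cast; ring

lemma constantCoeff_Dop (f : PowerSeries ℂ) :
    PowerSeries.constantCoeff (R := ℂ) (Dop f) = 0 := by
  rw [← PowerSeries.coeff_zero_eq_constantCoeff, coeff_Dop]; simp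

lemma coeff1_I1 : PowerSeries.coeff (R := ℂ) 1 (Iser 1) = 1 := by
  simp [Iser, PowerSeries.coeff_mk]

lemma coeff2_I1 : PowerSeries.coeff (R := ℂ) 2 (Iser 1) = 0 := by
  simp [Iser, PowerSeries.coeff_mk]

lemma coeff2_I2 : PowerSeries.coeff (R := ℂ) 2 (Iser 2) = 1 / 2 := by
  rw [Iser, PowerSeries.coeff_mk]
  norm_num [Nat.factorial]

/-- If `v` is a unit and `g` has zero constant coefficient, then `X * v ∣ g`. -/
lemma Xmul_dvd (v g : PowerSeries ℂ) (hv : IsUnit v)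
    (hg : PowerSeries.constantCoeff (R := ℂ) g = 0) :
    (PowerSeries.X * v) ∣ g := by
  have h1 : (PowerSeries.X * v) ∣ PowerSeries.X * 1 := by
    exact mul_dvd_mul_left _ (hv.dvd)
  rw [mul_one] at h1
  exact h1.trans (PowerSeries.X_dvd_iff.mpr hg)

/-- coefficient 1 of `g₂` is 1. -/
lemma coeff1_g2 (g₂ : PowerSeries ℂ) (hg₂ : g₂ * Dop (Iser 1) = Dop (Iser 2)) :
    PowerSeries.coeff (R := ℂ) 1 g₂ = 1 := by
  have h := congrArg (PowerSeries.coeff (R := ℂ) 2) hg₂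
  rw [PowerSeries.coeff_mul] at h
  have h2 : Finset.HasAntidiagonal.antidiagonal (2 : ℕ) = ({(0, 2), (1, 1), (2, 0)} : Finset (ℕ × ℕ)) := by decide
  rw [h2, Finset.sum_insert (by decide), Finset.sum_insert (by decide),
    Finset.sum_singleton] at h
  simp only [coeff_Dop] at h
  rw [coeff2_I1, coeff2_I2, coeff1_I1] at h
  norm_num at h
  exact h

/-- There exist unique `X₁, X₂` with `X₁·C₁ = D C₁` and `X₂·C₂ = D C₂`, both with constant
coefficient 1; moreover, with `f` the unique power series with `f·L = D L`, the series
`f − X₁` and `2f − X₁ − X₂` are divisible by `L` in `ℂ[[x]]`. -/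
theorem stmt4 (L g₂ : PowerSeries ℂ)
    (hL0 : PowerSeries.constantCoeff (R := ℂ) L = 0)
    (hL1 : PowerSeries.coeff (R := ℂ) 1 L = 1)
    (hLeq : L ^ 5 * (1 + PowerSeries.C (R := ℂ) (1 / 5 ^ 5) * PowerSeries.X ^ 5)
      = PowerSeries.X ^ 5)
    (hg₂ : g₂ * Dop (Iser 1) = Dop (Iser 2)) :
    (∃! X₁ : PowerSeries ℂ, X₁ * Dop (Iser 1) = Dop (Dop (Iser 1))) ∧
    (∃! X₂ : PowerSeries ℂ, X₂ * Dop g₂ = Dop (Dop g₂)) ∧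
    ∀ X₁ X₂ f : PowerSeries ℂ,
      X₁ * Dop (Iser 1) = Dop (Dop (Iser 1)) →
      X₂ * Dop g₂ = Dop (Dop g₂) →
      f * L = Dop L →
      PowerSeries.constantCoeff (R := ℂ) X₁ = 1 ∧
      PowerSeries.constantCoeff (R := ℂ) X₂ = 1 ∧
      L ∣ (f - X₁) ∧ L ∣ (2 * f - X₁ - X₂) := by
  -- basic nonvanishing facts
  have hC1ne : Dop (Iser 1) ≠ 0 := by
    intro h
    have := coeff_Dop (Iser 1) 1
    rw [h, coeff1_I1] at this
    simp at this
  have hg21 : PowerSeries.coeff (R := ℂ) 1 g₂ = 1 := coeff1_g2 g₂ hg₂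
  have hC2ne : Dop g₂ ≠ 0 := by
    intro h
    have := coeff_Dop g₂ 1
    rw [h, hg21] at this
    simp at this
  -- units
  have hu1 : IsUnit (PowerSeries.derivative ℂ (Iser 1)) := by
    rw [PowerSeries.isUnit_iff_constantCoeff, ← PowerSeries.coeff_zero_eq_constantCoeff,
      PowerSeries.coeff_derivative, coeff1_I1]
    norm_num
  have hu2 : IsUnit (PowerSeries.derivative ℂ g₂) := by
    rw [PowerSeries.isUnit_iff_constantCoeff, ← PowerSeries.coeff_zero_eq_constantCoeff,
      PowerSeries.coeff_derivative, hg21]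
    norm_num
  -- existence of X₁ and X₂ via divisibility
  have hdvd : ∀ h : PowerSeries ℂ, IsUnit (PowerSeries.derivative ℂ h) →
      ∃ X, X * Dop h = Dop (Dop h) := by
    intro h hu
    obtain ⟨c, hc⟩ := Xmul_dvd _ (Dop (Dop h)) hu (constantCoeff_Dop _)
    refine ⟨c, ?_⟩
    rw [hc]
    show c * (PowerSeries.X * _) = _
    ring
  constructor
  · obtain ⟨X, hX⟩ := hdvd (Iser 1) hu1
    exact ⟨X, hX, fun Y hY => mul_right_cancel₀ hC1ne (hY.trans hX.symm)⟩
  constructor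
  · obtain ⟨X, hX⟩ := hdvd g₂ hu2
    exact ⟨X, hX, fun Y hY => mul_right_cancel₀ hC2ne (hY.trans hX.symm)⟩
  intro X₁ X₂ f h1 h2 hf
  -- constant coefficients of X₁, X₂, f
  have key : ∀ (X h : PowerSeries ℂ), X * h = Dop h →
      PowerSeries.constantCoeff (R := ℂ) h = 0 → PowerSeries.coeff (R := ℂ) 1 h = 1 →
      PowerSeries.constantCoeff (R := ℂ) X = 1 := by
    intro X h hX h0 hone
    have hc := congrArg (PowerSeries.coeff (R := ℂ) 1) hX
    rw [PowerSeries.coeff_mul, coeff_Dop] at hc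
    have h1' : Finset.HasAntidiagonal.antidiagonal (1 : ℕ) = ({(0, 1), (1, 0)} : Finset (ℕ × ℕ)) := by decide
    rw [h1'] at hc
    simp only [Finset.sum_insert (by decide : ((0:ℕ),(1:ℕ)) ∉ ({(1,0)} : Finset (ℕ × ℕ))),
      Finset.sum_singleton, PowerSeries.coeff_zero_eq_constantCoeff, h0, hone, mul_zero,
      add_zero, mul_one] at hc
    rw [hc]; norm_num
  have hX1 : PowerSeries.constantCoeff (R := ℂ) X₁ = 1 := by
    refine key _ _ h1 (constantCoeff_Dop _) ?_
    rw [coeff_Dop, coeff1_I1]; norm_num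
  have hX2 : PowerSeries.constantCoeff (R := ℂ) X₂ = 1 := by
    refine key _ _ h2 (constantCoeff_Dop _) ?_
    rw [coeff_Dop, hg21]; norm_num
  have hfc : PowerSeries.constantCoeff (R := ℂ) f = 1 := key _ _ hf hL0 hL1
  -- L = X * v with v a unit
  obtain ⟨v, hv⟩ := PowerSeries.X_dvd_iff.mpr hL0
  have hvu : IsUnit v := by
    rw [PowerSeries.isUnit_iff_constantCoeff, ← PowerSeries.coeff_zero_eq_constantCoeff,
      ← PowerSeries.coeff_succ_X_mul, ← hv, hL1]
    exact isUnit_one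
  have hLd : ∀ g : PowerSeries ℂ, PowerSeries.constantCoeff (R := ℂ) g = 0 → L ∣ g := by
    intro g hg
    rw [hv]
    exact Xmul_dvd v g hvu hg
  refine ⟨hX1, hX2, hLd _ ?_, hLd _ ?_⟩
  · simp [hfc, hX1]
  · simp only [map_sub, map_mul, map_ofNat, hfc, hX1, hX2, mul_one]
    norm_num
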